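/- arXiv:1008.4753 — 2 statements merged into one kernel-verified Lean document; each statement's English description precedes it below -/
import Mathlib

section
/- Fix m ≥ 1 and l ∈ {1,...,m-1}. Call a sequence of integers (s_1,...,s_{m-1}) admissible with center l if: (1) s_k ≥ 0 for all k; (2) s_i ≤ s_{i+1} ≤ s_i + 1 for i < l; (3) s_i ≥ s_{i+1} ≥ s_i − 1 for i ≥ l; (4) s_1 ≤ 1 and s_{m-1} ≤ 1. Then for any p ∈ {1,...,m-1}, the admissible sequences with center p are in bijection with strictly increasing tuples 0 ≤ k_1 < k_2 < ... < k_p ≤ m−1 of integers; in particular there are exactly C(m, p) admissible sequences with center p. -/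
/-!
Subtracting an admissible sequence from `i ↦ min i p` turns it into a lattice path `c` with
`c 0 = 0`, steps `0` or `1`, and `c i = p` for `i ≥ m`: the centre `p` is exactly where the
allowed steps of `s` switch from `{0, 1}` to `{0, -1}`, and the conditions `s 1 ≤ 1`,
`s (m - 1) ≤ 1` are the steps at `0` and at `m - 1`. Such a path is determined by the set of its
`p` ascent positions in `{0, …, m - 1}`, and listing that set increasingly gives the tuple `k`;
conversely `s i = min i p - #{j | k j < i}`.
-/

/-- A sequence of integers (s_1, …, s_{m-1}) is admissible with center l if:
(1) s_k ≥ 0 for all k; (2) s_i ≤ s_{i+1} ≤ s_i + 1 for i < l;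
(3) s_i ≥ s_{i+1} ≥ s_i − 1 for i ≥ l; (4) s_1 ≤ 1 and s_{m-1} ≤ 1. -/
def Admissible (m l : ℕ) (s : ℕ → ℤ) : Prop :=
  (∀ k, 1 ≤ k → k ≤ m - 1 → 0 ≤ s k) ∧
  (∀ i, 1 ≤ i → i < l → i ≤ m - 2 → s i ≤ s (i + 1) ∧ s (i + 1) ≤ s i + 1) ∧
  (∀ i, l ≤ i → i ≤ m - 2 → s (i + 1) ≤ s i ∧ s i - 1 ≤ s (i + 1)) ∧
  s 1 ≤ 1 ∧ s (m - 1) ≤ 1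

open Finset

def IsUnitStepPath (m p : ℕ) (c : ℕ → ℤ) : Prop :=
  c 0 = 0 ∧ (∀ i, c (i + 1) = c i ∨ c (i + 1) = c i + 1) ∧ ∀ i, m ≤ i → c i = p

namespace IsUnitStepPath

variable {m p : ℕ} {c : ℕ → ℤ}

theorem monotone (hc : IsUnitStepPath m p c) : Monotone c :=
  monotone_nat_of_le_succ fun i => by rcases hc.2.1 i with h | h <;> omega

theorem nonneg (hc : IsUnitStepPath m p c) (i : ℕ) : 0 ≤ c i :=
  hc.1 ▸ hc.monotone i.zero_le

theorem le_self (hc : IsUnitStepPath m p c) (i : ℕ) : c i ≤ i := by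
  induction i with
  | zero => simp [hc.1]
  | succ i ih => rcases hc.2.1 i with h | h <;> push_cast <;> omega

theorem le_height (hc : IsUnitStepPath m p c) (i : ℕ) : c i ≤ p :=
  hc.2.2 (i + m) (by omega) ▸ hc.monotone (by omega)

end IsUnitStepPath

def pathOf (p : ℕ) (s : ℕ → ℤ) (i : ℕ) : ℤ := min (i : ℤ) p - s i

theorem pathOf_involutive (p : ℕ) : Function.Involutive (pathOf p) := fun s => by
  funext i; simp [pathOf]

section Admissible

variable {m p : ℕ} {s : ℕ → ℤ}

theorem Admissible.nonneg (hs : Admissible m p s) (hb : ∀ k, (k = 0 ∨ m ≤ k) → s k = 0)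
    (k : ℕ) : 0 ≤ s k := by
  by_cases hk : 1 ≤ k ∧ k ≤ m - 1
  · exact hs.1 k hk.1 hk.2
  · exact (hb k (by omega)).ge

theorem isUnitStepPath_pathOf (hp : p ≤ m - 1) (hs : Admissible m p s)
    (hb : ∀ k, (k = 0 ∨ m ≤ k) → s k = 0) : IsUnitStepPath m p (pathOf p s) := by
  have hnonneg := hs.nonneg hb
  obtain ⟨-, hup, hdown, hfirst, hlast⟩ := hs
  refine ⟨by simp [pathOf, hb 0 (.inl rfl)], fun i => ?_, fun i hi => ?_⟩
  · have hincr : if i < p then s i ≤ s (i + 1) ∧ s (i + 1) ≤ s i + 1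
        else s (i + 1) ≤ s i ∧ s i ≤ s (i + 1) + 1 := by
      split_ifs with hip
      · rcases i with _ | i
        · have := hnonneg 1; simp [hb 0 (.inl rfl)]; omega
        · exact hup _ (by omega) hip (by omega)
      · rcases lt_trichotomy (i + 1) m with him | rfl | him
        · have := hdown i (by omega) (by omega); omega
        · simpa [hb (i + 1) (.inr le_rfl)] using ⟨hnonneg i, hlast⟩
        · simp [hb i (.inr (by omega)), hb (i + 1) (.inr (by omega))]
    simp only [pathOf]
    split_ifs at hincr <;> omega
  · simp [pathOf, hb i (.inr hi)]; omega

theorem admissible_pathOf {c : ℕ → ℤ} (hp : p ≤ m - 1) (hc : IsUnitStepPath m p c) :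
    Admissible m p (pathOf p c) ∧ ∀ k, (k = 0 ∨ m ≤ k) → pathOf p c k = 0 := by
  obtain ⟨hzero, hstep, hend⟩ := id hc
  simp only [Admissible, pathOf]
  refine ⟨⟨fun k _ _ => ?_, fun i _ hi _ => ?_, fun i hi _ => ?_, ?_, ?_⟩, fun k hk => ?_⟩
  · have := hc.le_self k; have := hc.le_height k; omega
  · have := hstep i; omega
  · have := hstep i; omega
  · have := hc.nonneg 1; omega
  · rcases Nat.eq_zero_or_pos m with rfl | hm
    · simp [hzero]
    · have := hstep (m - 1); rw [Nat.sub_add_cancel hm, hend m le_rfl] at this; omega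
  · rcases hk with rfl | hk
    · simp [hzero]
    · simp [hend k hk]; omega

theorem admissible_and_boundary_iff (hp : p ≤ m - 1) (s : ℕ → ℤ) :
    (Admissible m p s ∧ ∀ k, (k = 0 ∨ m ≤ k) → s k = 0) ↔
      IsUnitStepPath m p (pathOf p s) :=
  ⟨fun h => isUnitStepPath_pathOf hp h.1 h.2,
    fun h => pathOf_involutive p s ▸ admissible_pathOf hp h⟩

end Admissible

def ascentSet (m : ℕ) (c : ℕ → ℤ) : Finset (Fin m) := {x | c (x + 1) = c x + 1}

@[simp] theorem mem_ascentSet {m : ℕ} {c : ℕ → ℤ} {x : Fin m} :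
    x ∈ ascentSet m c ↔ c (x + 1) = c x + 1 := by
  simp [ascentSet]

def countBelow {m : ℕ} (S : Finset (Fin m)) (i : ℕ) : ℤ := #{x ∈ S | x.val < i}

section countBelow

variable {m : ℕ} (S : Finset (Fin m))

@[simp] theorem countBelow_zero : countBelow S 0 = 0 := by simp [countBelow]

theorem countBelow_succ (x : Fin m) :
    countBelow S (x + 1) = countBelow S x + if x ∈ S then 1 else 0 := by
  have hsplit :
      {y ∈ S | y.val < x.val + 1} = {y ∈ S | y.val < x.val} ∪ {y ∈ S | y = x} := by
    ext y; simp [le_iff_lt_or_eq, Fin.val_inj, and_or_left]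
  have hdisj : Disjoint {y ∈ S | y.val < x.val} {y ∈ S | y = x} :=
    disjoint_filter.2 fun y _ hlt heq => by simp [heq] at hlt
  rw [countBelow, countBelow, hsplit, card_union_of_disjoint hdisj, filter_eq']
  split_ifs <;> simp

theorem countBelow_of_le {i : ℕ} (hi : m ≤ i) : countBelow S i = #S := by
  rw [countBelow, filter_true_of_mem fun x _ => by omega]

theorem isUnitStepPath_countBelow : IsUnitStepPath m #S (countBelow S) := by
  refine ⟨countBelow_zero S, fun i => ?_, fun i hi => countBelow_of_le S hi⟩
  by_cases hi : i < m
  · have := countBelow_succ S ⟨i, hi⟩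
    split_ifs at this <;> simp_all
  · simp [countBelow_of_le S (not_lt.1 hi), countBelow_of_le S (by omega : m ≤ i + 1)]

end countBelow

namespace IsUnitStepPath

variable {m p : ℕ} {c : ℕ → ℤ}

theorem countBelow_ascentSet (hc : IsUnitStepPath m p c) : countBelow (ascentSet m c) = c := by
  funext i
  induction i with
  | zero => simp [hc.1]
  | succ i ih =>
    by_cases hi : i < m
    · have := countBelow_succ (ascentSet m c) ⟨i, hi⟩
      simp only [mem_ascentSet] at this
      rcases hc.2.1 i with h | h <;> simp_all
    · rw [countBelow_of_le _ (by omega), ← countBelow_of_le _ (not_lt.1 hi), ih,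
        hc.2.2 i (by omega), hc.2.2 (i + 1) (by omega)]

theorem card_ascentSet (hc : IsUnitStepPath m p c) : #(ascentSet m c) = p := by
  have := congrFun hc.countBelow_ascentSet m
  rw [countBelow_of_le _ le_rfl, hc.2.2 m le_rfl] at this
  exact_mod_cast this

end IsUnitStepPath

theorem ascentSet_countBelow {m : ℕ} (S : Finset (Fin m)) : ascentSet m (countBelow S) = S := by
  ext x
  simp only [mem_ascentSet, countBelow_succ]
  split_ifs <;> simp_all

def pathEquivPowersetCard (m p : ℕ) :
    {c : ℕ → ℤ // IsUnitStepPath m p c} ≃ Set.powersetCard (Fin m) p where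
  toFun c := ⟨ascentSet m c, c.2.card_ascentSet⟩
  invFun S := ⟨countBelow S.1, by
    simpa [Set.powersetCard.card_eq S] using isUnitStepPath_countBelow S.1⟩
  left_inv c := Subtype.ext c.2.countBelow_ascentSet
  right_inv S := Subtype.ext (ascentSet_countBelow S.1)

def admissibleEquivPowersetCard {m p : ℕ} (hp : p ≤ m - 1) :
    {s : ℕ → ℤ // Admissible m p s ∧ ∀ k, (k = 0 ∨ m ≤ k) → s k = 0} ≃
      Set.powersetCard (Fin m) p :=
  ((pathOf_involutive p).toPerm _).subtypeEquiv (admissible_and_boundary_iff hp) |>.trans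
    (pathEquivPowersetCard m p)

def orderEmbEquivStrictMono {m p : ℕ} (hpm : p ≤ m) :
    (Fin p ↪o Fin m) ≃ {k : Fin p → ℕ // StrictMono k ∧ ∀ j, k j ≤ m - 1} where
  toFun f := ⟨fun j => f j, fun _ _ h => f.strictMono h, fun j => Nat.le_sub_one_of_lt (f j).2⟩
  invFun k := OrderEmbedding.ofStrictMono
    (fun j => ⟨k.1 j, by have := k.2.2 j; have := j.2; omega⟩) fun _ _ h => k.2.1 h
  left_inv f := by ext; rfl
  right_inv k := rfl

theorem stmt3_general (m p : ℕ) (hp2 : p ≤ m - 1) :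
    Nonempty
      ({s : ℕ → ℤ // Admissible m p s ∧ ∀ k, (k = 0 ∨ m ≤ k) → s k = 0} ≃
        {k : Fin p → ℕ // StrictMono k ∧ ∀ j, k j ≤ m - 1}) ∧
    Nat.card {s : ℕ → ℤ // Admissible m p s ∧ ∀ k, (k = 0 ∨ m ≤ k) → s k = 0}
      = m.choose p := by
  have e := admissibleEquivPowersetCard hp2
  refine ⟨⟨e.trans <| Set.powersetCard.ofFinEmbEquiv.symm.trans <|
    orderEmbEquivStrictMono (by omega)⟩, ?_⟩
  rw [Nat.card_congr e, Set.powersetCard.card, Nat.card_fin]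

/-- For p ∈ {1,…,m-1}, admissible sequences with center p are in bijection
with strictly increasing tuples 0 ≤ k_1 < … < k_p ≤ m−1; in particular there are exactly
C(m,p) admissible sequences with center p. -/
theorem stmt3 (m p : ℕ) (hm : 1 ≤ m) (hp1 : 1 ≤ p) (hp2 : p ≤ m - 1) :
    Nonempty
      ({s : ℕ → ℤ // Admissible m p s ∧ ∀ k, (k = 0 ∨ m ≤ k) → s k = 0} ≃
        {k : Fin p → ℕ // StrictMono k ∧ ∀ j, k j ≤ m - 1}) ∧
    Nat.card {s : ℕ → ℤ // Admissible m p s ∧ ∀ k, (k = 0 ∨ m ≤ k) → s k = 0}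
      = m.choose p :=
  stmt3_general m p hp2
end

section
/- Fix m ≥ 1 and p ∈ {1,...,m−1}. In the polynomial ring ℚ[q_1,...,q_{m-1}], the coefficient of z^p in ∏_{k=0}^{m-1}(1 + (∏_{j=1}^k q_j) z) equals (∏_{j=1}^{p-1} q_j^{p-j}) · Σ_α q^α, where the sum runs over all admissible sequences α = (s_1,...,s_{m-1}) with center p, and q^α := ∏_{k=1}^{m-1} q_k^{s_k}. -/
open Finset Polynomial MvPolynomial

/-!
Expanding the product, the coefficient of `z ^ p` is the sum, over `p`-subsets `T` of
`{0, …, m - 1}`, of `∏ k ∈ T, q₁ ⋯ q_k = ∏ j, q_j ^ E_j`, where `E_j = #{k ∈ T | j ≤ k}`.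
The sequence `E` steps down by `0` or `1` from `E₀ = p` to `E_m = 0`, and `T` is recovered
from `E` as its set of descents. Subtracting `(p - j)₊`, which the prefactor puts back,
turns these sequences into exactly the admissible sequences with center `p`.
-/

theorem Polynomial.coeff_prod_C_mul_X_add_one {ι R : Type*} [CommSemiring R] (s : Finset ι)
    (f : ι → R) (n : ℕ) :
    (∏ i ∈ s, (Polynomial.C (f i) * Polynomial.X + 1)).coeff n
      = ∑ t ∈ s.powersetCard n, ∏ i ∈ t, f i := by
  classical
  simp_rw [prod_add_one, prod_mul_distrib, ← map_prod, prod_const, finsetSum_coeff,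
    coeff_C_mul_X_pow, powersetCard_eq_filter, sum_filter, eq_comm]

def tailCard (T : Finset ℕ) (k : ℕ) : ℕ := #{x ∈ T | k ≤ x}

section tailCard

variable {T : Finset ℕ} {m k : ℕ}

lemma tailCard_eq_tailCard_succ_add (T : Finset ℕ) (k : ℕ) :
    tailCard T k = tailCard T (k + 1) + if k ∈ T then 1 else 0 := by
  have hsplit : {x ∈ T | k ≤ x} = {x ∈ T | k + 1 ≤ x} ∪ {x ∈ T | x = k} := by
    rw [← filter_or]
    exact filter_congr fun x _ => by omega
  rw [tailCard, hsplit, card_union_of_disjoint (disjoint_filter.2 fun x _ _ => by omega),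
    filter_eq', tailCard]
  split_ifs <;> simp

lemma tailCard_zero (T : Finset ℕ) : tailCard T 0 = #T := by
  rw [tailCard, filter_true_of_mem fun x _ => Nat.zero_le x]

lemma tailCard_le_card (T : Finset ℕ) (k : ℕ) : tailCard T k ≤ #T :=
  card_filter_le _ _

lemma card_le_tailCard_add (T : Finset ℕ) (k : ℕ) : #T ≤ tailCard T k + k := by
  have hlow : #{x ∈ T | ¬k ≤ x} ≤ k :=
    (card_le_card fun x hx => mem_range.2 (by simp at hx; omega)).trans (card_range k).le
  have := card_filter_add_card_filter_not (s := T) (fun x => k ≤ x)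
  rw [tailCard]
  omega

lemma tailCard_eq_zero (hT : T ⊆ range m) (hk : m ≤ k) : tailCard T k = 0 :=
  card_eq_zero.2 <| filter_eq_empty_iff.2 fun x hx => by have := mem_range.1 (hT hx); omega

lemma tailCard_injective : Function.Injective tailCard := by
  intro T T' h
  ext x
  have hT := tailCard_eq_tailCard_succ_add T x
  have hT' := tailCard_eq_tailCard_succ_add T' x
  rw [h] at hT
  split_ifs at hT hT' <;> simp_all

lemma tailCard_descents {E : ℕ → ℤ} (hstep : ∀ k < m, E (k + 1) ≤ E k ∧ E k ≤ E (k + 1) + 1)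
    (hE : ∀ k, m ≤ k → E k = 0) (k : ℕ) :
    (tailCard {x ∈ range m | E (x + 1) < E x} k : ℤ) = E k := by
  induction hn : m - k generalizing k with
  | zero => rw [tailCard_eq_zero (filter_subset _ _) (by omega), hE k (by omega), Nat.cast_zero]
  | succ n ih =>
    have hk : k < m := by omega
    have := hstep k hk
    rw [tailCard_eq_tailCard_succ_add, Nat.cast_add, ih (k + 1) (by omega)]
    simp only [mem_filter, mem_range, hk, true_and]
    split_ifs <;> push_cast <;> omega

end tailCard

-- The subtraction `p - k` is truncated in `ℕ`, i.e. it is `(p - k)₊`.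
def seqOfSubset (p : ℕ) (T : Finset ℕ) (k : ℕ) : ℤ := tailCard T k - (p - k : ℕ)

lemma seqOfSubset_injective (p : ℕ) : Function.Injective (seqOfSubset p) := fun T T' h =>
  tailCard_injective <| funext fun k => by
    have := congrFun h k
    simp only [seqOfSubset] at this
    omega

section Admissible

variable {m p : ℕ} {T : Finset ℕ} {s : ℕ → ℤ}

lemma admissible_seqOfSubset (hp : p ≤ m - 1) (hT : T ⊆ range m) (hcard : #T = p) :
    Admissible m p (seqOfSubset p T) ∧ ∀ k, (k = 0 ∨ m ≤ k) → seqOfSubset p T k = 0 := by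
  have step := fun k => tailCard_eq_tailCard_succ_add T k
  have low := fun k => card_le_tailCard_add T k
  have hzero := fun k (hk : m ≤ k) => tailCard_eq_zero hT hk
  refine ⟨⟨fun k _ _ => ?_, fun i _ _ _ => ?_, fun i _ _ => ?_, ?_, ?_⟩, fun k hk => ?_⟩ <;>
    simp only [seqOfSubset]
  · have := low k; omega
  · have := step i; split_ifs at this <;> omega
  · have := step i; split_ifs at this <;> omega
  · have := tailCard_le_card T 1; omega
  · have := step (m - 1); have := hzero (m - 1 + 1) (by omega); split_ifs at * <;> omega
  · rcases hk with rfl | hk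
    · rw [tailCard_zero]; omega
    · rw [hzero k hk]; omega

lemma Admissible.step (hA : Admissible m p s) (hz : ∀ k, (k = 0 ∨ m ≤ k) → s k = 0)
    (hp : p ≤ m - 1) (k : ℕ) (hk : k < m) :
    s (k + 1) + (p - (k + 1) : ℕ) ≤ s k + (p - k : ℕ) ∧
      s k + (p - k : ℕ) ≤ s (k + 1) + (p - (k + 1) : ℕ) + 1 := by
  obtain ⟨hnonneg, hup, hdown, h1, hlast⟩ := hA
  have := hz 0 (by omega)
  have := hz m (Or.inr le_rfl)
  have := hnonneg k
  have := hnonneg (k + 1)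
  have := hup k
  have := hdown k
  rcases Nat.eq_zero_or_pos k with rfl | hk0
  · have := hnonneg 1
    have := hdown 0
    simp only [zero_add, Nat.sub_zero] at *
    omega
  · rcases eq_or_ne (k + 1) m with hkm | hkm
    · have : s (m - 1) = s k := by rw [← hkm, Nat.add_sub_cancel]
      rw [hkm]; omega
    · omega

lemma exists_seqOfSubset_eq (hp : p ≤ m - 1) (hA : Admissible m p s)
    (hz : ∀ k, (k = 0 ∨ m ≤ k) → s k = 0) :
    ∃ T ⊆ range m, #T = p ∧ seqOfSubset p T = s := by
  set E : ℕ → ℤ := fun k => s k + (p - k : ℕ)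
  have hE := tailCard_descents (m := m) (E := E) (hA.step hz hp)
    fun k hk => by simp only [E, hz k (Or.inr hk)]; omega
  refine ⟨{x ∈ range m | E (x + 1) < E x}, filter_subset _ _, ?_, funext fun k => ?_⟩
  · have hE0 : E 0 = p := by simp [E, hz 0 (Or.inl rfl)]
    have := hE 0
    rw [tailCard_zero, hE0] at this
    exact_mod_cast this
  · simp only [seqOfSubset, hE k, E]
    omega

lemma admissible_set_eq_image (hp : p ≤ m - 1) :
    {s : ℕ → ℤ | Admissible m p s ∧ ∀ k, (k = 0 ∨ m ≤ k) → s k = 0}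
      = seqOfSubset p '' ↑((range m).powersetCard p) := by
  ext s
  simp only [Set.mem_ofPred_eq, Set.mem_image, mem_coe, mem_powersetCard]
  constructor
  · rintro ⟨hA, hz⟩
    obtain ⟨T, hT, hcard, rfl⟩ := exists_seqOfSubset_eq hp hA hz
    exact ⟨T, ⟨hT, hcard⟩, rfl⟩
  · rintro ⟨T, ⟨hT, hcard⟩, rfl⟩
    exact admissible_seqOfSubset hp hT hcard

end Admissible

section Monomials

variable {M : Type*} [CommMonoid M] (f : ℕ → M) {m p : ℕ} {T : Finset ℕ}

lemma prod_prod_Icc_eq_prod_pow_tailCard (hT : T ⊆ range m) :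
    ∏ k ∈ T, ∏ j ∈ Icc 1 k, f j = ∏ j ∈ Icc 1 (m - 1), f j ^ tailCard T j := by
  rw [prod_comm' (t' := Icc 1 (m - 1)) (s' := fun j => {x ∈ T | j ≤ x}) fun k j => by
    simp only [mem_Icc, mem_filter]
    constructor
    · rintro ⟨hk, h1j, hjk⟩
      exact ⟨⟨hk, hjk⟩, h1j, by have := mem_range.1 (hT hk); omega⟩
    · rintro ⟨⟨hk, hjk⟩, h1j, -⟩
      exact ⟨hk, h1j, hjk⟩]
  simp only [prod_const, tailCard]

lemma prod_pow_sub_mul_prod_pow_seqOfSubset (hcard : #T = p) (hp : p ≤ m) :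
    (∏ j ∈ Icc 1 (p - 1), f j ^ (p - j)) * ∏ k ∈ Icc 1 (m - 1), f k ^ (seqOfSubset p T k).toNat
      = ∏ j ∈ Icc 1 (m - 1), f j ^ tailCard T j := by
  rw [prod_subset (Icc_subset_Icc_right (by omega : p - 1 ≤ m - 1)) fun j hj hj' => by
      simp only [mem_Icc] at hj hj'; rw [Nat.sub_eq_zero_of_le (by omega), pow_zero],
    ← prod_mul_distrib]
  refine prod_congr rfl fun j _ => ?_
  rw [← pow_add]
  have := card_le_tailCard_add T j
  congr 1
  subst hcard
  simp only [seqOfSubset]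
  omega

end Monomials

theorem stmt5_general (m p : ℕ) (hp2 : p ≤ m - 1) :
    (∏ k ∈ Finset.range m,
        (Polynomial.C (∏ j ∈ Finset.Icc 1 k, (MvPolynomial.X j : MvPolynomial ℕ ℚ)) *
          Polynomial.X + 1)).coeff p
      = (∏ j ∈ Finset.Icc 1 (p - 1), (MvPolynomial.X j : MvPolynomial ℕ ℚ) ^ (p - j)) *
        ∑ᶠ s ∈ {s : ℕ → ℤ | Admissible m p s ∧ ∀ k, (k = 0 ∨ m ≤ k) → s k = 0},
          ∏ k ∈ Finset.Icc 1 (m - 1), (MvPolynomial.X k : MvPolynomial ℕ ℚ) ^ (s k).toNat := by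
  rw [coeff_prod_C_mul_X_add_one, admissible_set_eq_image hp2,
    finsum_mem_image (seqOfSubset_injective p).injOn, finsum_mem_coe_finset, mul_sum]
  refine sum_congr rfl fun T hT => ?_
  obtain ⟨hT, hcard⟩ := mem_powersetCard.1 hT
  rw [prod_prod_Icc_eq_prod_pow_tailCard _ hT,
    prod_pow_sub_mul_prod_pow_seqOfSubset _ hcard (by omega)]

/-- In ℚ[q_1,…,q_{m-1}], the coefficient of z^p in
∏_{k=0}^{m-1}(1 + (∏_{j=1}^k q_j) z) equals (∏_{j=1}^{p-1} q_j^{p-j}) · Σ_α q^α, the sum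
running over all admissible sequences α = (s_1,…,s_{m-1}) with center p, where
q^α := ∏_{k=1}^{m-1} q_k^{s_k}. -/
theorem stmt5 (m p : ℕ) (hm : 1 ≤ m) (hp1 : 1 ≤ p) (hp2 : p ≤ m - 1) :
    (∏ k ∈ Finset.range m,
        (Polynomial.C (∏ j ∈ Finset.Icc 1 k, (MvPolynomial.X j : MvPolynomial ℕ ℚ)) *
          Polynomial.X + 1)).coeff p
      = (∏ j ∈ Finset.Icc 1 (p - 1), (MvPolynomial.X j : MvPolynomial ℕ ℚ) ^ (p - j)) *
        ∑ᶠ s ∈ {s : ℕ → ℤ | Admissible m p s ∧ ∀ k, (k = 0 ∨ m ≤ k) → s k = 0},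
          ∏ k ∈ Finset.Icc 1 (m - 1), (MvPolynomial.X k : MvPolynomial ℕ ℚ) ^ (s k).toNat :=
  stmt5_general m p hp2
end
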